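/- arXiv:2502.09584 — 4 statements merged into one kernel-verified Lean document; each statement's English description precedes it below -/
import Mathlib

section
/- Let Compress be any compression function with finite global sensitivity GS, and let ε > 0 and δ ∈ (0,1). Define the randomized algorithm A_{ε,δ}(w) := DPCompress(w, ε, δ). Then A_{ε,δ} is an (ε, δ)-differentially private compression scheme: for every n ≥ 1, every pair of neighboring strings w ∼ w' ∈ Σⁿ, and every set S ⊆ ℕ, Pr[|A_{ε,δ}(w)| ∈ S] ≤ e^ε · Pr[|A_{ε,δ}(w')| ∈ S] + δ. -/
open MeasureTheory

/-- `w ∼ w'`: strings of length `n` (1-indexed positions) differing in exactly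
one position. -/
def Neighbor {α : Type*} (n : ℕ) (w w' : ℕ → α) : Prop :=
  ∃ j, 1 ≤ j ∧ j ≤ n ∧ w j ≠ w' j ∧ ∀ i, i ≠ j → w i = w' i

/-- The Laplace distribution with mean `0` and scale parameter `b`, given by the
density `z ↦ (1/(2b))·exp(−|z|/b)` with respect to Lebesgue measure. -/
noncomputable def laplaceMeasure (b : ℝ) : Measure ℝ :=
  volume.withDensity (fun z => ENNReal.ofReal ((1 / (2 * b)) * Real.exp (-|z| / b)))

/-- The length of `DPCompress(w, ε, δ)` when the Laplace sample is `z`: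
`|Compress(w)| + p` with padding `p = max {1, ⌈z + k⌉}`. -/
noncomputable def dpLen (c : ℕ) (k z : ℝ) : ℕ :=
  c + (max 1 ⌈z + k⌉).toNat

/-!
Shifting the Laplace noise by `d` changes its density by a factor at most `exp (|d| / b)`.
As long as the padding `⌈Z + k⌉` is not clipped at `1`, the lengths for `w` and `w'` differ
exactly by such a shift with `|d| ≤ GS`, which costs the factor `e^ε` when `b = GS / ε`.
Clipping requires `Z < b · log (2δ)`, an event of Laplace probability at most `δ`.
-/

open Set Real

noncomputable def laplacePDF (b z : ℝ) : ℝ := 1 / (2 * b) * exp (-|z| / b)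

theorem measurable_laplacePDF (b : ℝ) : Measurable (laplacePDF b) := by
  unfold laplacePDF; fun_prop

theorem laplaceMeasure_apply (b : ℝ) {s : Set ℝ} (hs : MeasurableSet s) :
    laplaceMeasure b s = ∫⁻ z in s, ENNReal.ofReal (laplacePDF b z) :=
  withDensity_apply _ hs

theorem laplacePDF_sub_le {b : ℝ} (hb : 0 ≤ b) (z d : ℝ) :
    laplacePDF b (z - d) ≤ exp (|d| / b) * laplacePDF b z := by
  have h : -|z - d| / b ≤ |d| / b + -|z| / b := by
    rw [← add_div]
    gcongr
    linarith [sub_add_cancel z d ▸ abs_add_le (z - d) d]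
  calc laplacePDF b (z - d) ≤ 1 / (2 * b) * exp (|d| / b + -|z| / b) := by
        unfold laplacePDF; gcongr
    _ = exp (|d| / b) * laplacePDF b z := by rw [exp_add, laplacePDF]; ring

theorem laplaceMeasure_preimage_add_le {b : ℝ} (hb : 0 ≤ b) (d : ℝ) {s : Set ℝ}
    (hs : MeasurableSet s) :
    laplaceMeasure b ((· + d) ⁻¹' s) ≤ ENNReal.ofReal (exp (|d| / b)) * laplaceMeasure b s := by
  have hf : Measurable fun y => ENNReal.ofReal (laplacePDF b (y - d)) :=
    ((measurable_laplacePDF b).comp (measurable_sub_const d)).ennreal_ofReal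
  calc laplaceMeasure b ((· + d) ⁻¹' s)
      = ∫⁻ z in (· + d) ⁻¹' s, ENNReal.ofReal (laplacePDF b (z + d - d)) := by
        rw [laplaceMeasure_apply b (hs.preimage (measurable_add_const d))]
        simp_rw [add_sub_cancel_right]
    _ = ∫⁻ y in s, ENNReal.ofReal (laplacePDF b (y - d)) :=
        (measurePreserving_add_right volume d).setLIntegral_comp_preimage hs hf
    _ ≤ ∫⁻ y in s, ENNReal.ofReal (exp (|d| / b)) * ENNReal.ofReal (laplacePDF b y) := by
        gcongr with y
        rw [← ENNReal.ofReal_mul (exp_nonneg _)]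
        exact ENNReal.ofReal_le_ofReal (laplacePDF_sub_le hb y d)
    _ = ENNReal.ofReal (exp (|d| / b)) * laplaceMeasure b s := by
        rw [lintegral_const_mul _ (measurable_laplacePDF b).ennreal_ofReal,
          laplaceMeasure_apply b hs]

theorem laplaceMeasure_Iic_le {b : ℝ} (hb : 0 < b) (t : ℝ) :
    laplaceMeasure b (Iic t) ≤ ENNReal.ofReal (exp (t / b) / 2) := by
  have hint : IntegrableOn (fun z => 1 / (2 * b) * exp (1 / b * z)) (Iic t) :=
    (integrableOn_exp_mul_Iic (by positivity) t).const_mul _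
  calc laplaceMeasure b (Iic t)
      = ∫⁻ z in Iic t, ENNReal.ofReal (laplacePDF b z) := laplaceMeasure_apply b measurableSet_Iic
    _ ≤ ∫⁻ z in Iic t, ENNReal.ofReal (1 / (2 * b) * exp (1 / b * z)) := by
        unfold laplacePDF
        gcongr with z
        rw [div_eq_inv_mul, one_div]
        gcongr
        exact neg_abs_le z
    _ = ENNReal.ofReal (∫ z in Iic t, 1 / (2 * b) * exp (1 / b * z)) :=
        (ofReal_integral_eq_lintegral_ofReal hint (.of_forall fun _ => by positivity)).symm
    _ = ENNReal.ofReal (exp (t / b) / 2) := by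
        rw [integral_const_mul, integral_exp_mul_Iic (by positivity)]
        congr 1
        field_simp

theorem measurable_dpLen (c : ℕ) (k : ℝ) : Measurable (dpLen c k) :=
  (Measurable.of_discrete (f := fun m : ℤ => c + (max 1 m).toNat)).comp
    (Int.measurable_ceil.comp (measurable_add_const k))

theorem dpLen_add_sub {c c' : ℕ} {k z : ℝ} (hz : |(c : ℝ) - c'| + 1 ≤ z + k) :
    dpLen c' k (z + (c - c')) = dpLen c k z := by
  have hceil : |(c : ℤ) - c'| + 1 ≤ ⌈z + k⌉ := Int.le_ceil_iff.mpr (by push_cast; linarith)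
  have hshift : ⌈z + (c - c') + k⌉ = ⌈z + k⌉ + ((c : ℤ) - c') := by
    rw [← Int.ceil_add_intCast]; push_cast; ring_nf
  simp only [dpLen, hshift]
  have := le_abs_self ((c : ℤ) - c')
  have := neg_abs_le ((c : ℤ) - c')
  omega

theorem setOf_dpLen_mem_subset (c c' : ℕ) (k : ℝ) (S : Set ℕ) :
    {z | dpLen c k z ∈ S} ⊆
      Iio (|(c : ℝ) - c'| + 1 - k) ∪ (· + ((c : ℝ) - c')) ⁻¹' {z | dpLen c' k z ∈ S} := by
  intro z hz
  rcases lt_or_ge z (|(c : ℝ) - c'| + 1 - k) with hlt | hge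
  · exact Or.inl hlt
  · refine Or.inr ?_
    show dpLen c' k (z + (c - c')) ∈ S
    rwa [dpLen_add_sub (by linarith)]

theorem dpcompress_is_dp_general {α β : Type*} (n : ℕ)
    (Compress : (ℕ → α) → List β) (GS : ℕ) (hGSpos : 0 < GS)
    (hGS : ∀ w w' : ℕ → α, Neighbor n w w' →
      |((Compress w).length : ℤ) - ((Compress w').length : ℤ)| ≤ (GS : ℤ))
    (ε δ : ℝ) (hε : 0 < ε) (hδ0 : 0 < δ)
    (w w' : ℕ → α) (hnb : Neighbor n w w') (S : Set ℕ) :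
    laplaceMeasure ((GS : ℝ) / ε)
        {z : ℝ | dpLen (Compress w).length
            ((GS : ℝ) / ε * Real.log (1 / (2 * δ)) + GS + 1) z ∈ S}
      ≤ ENNReal.ofReal (Real.exp ε) *
          laplaceMeasure ((GS : ℝ) / ε)
            {z : ℝ | dpLen (Compress w').length
                ((GS : ℝ) / ε * Real.log (1 / (2 * δ)) + GS + 1) z ∈ S}
        + ENNReal.ofReal δ := by
  set b : ℝ := (GS : ℝ) / ε
  set k : ℝ := b * log (1 / (2 * δ)) + GS + 1
  set c := (Compress w).length
  set c' := (Compress w').length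
  have hb : 0 < b := by positivity
  have hd : |(c : ℝ) - c'| ≤ GS := by exact_mod_cast hGS w w' hnb
  have hclip : Iio (|(c : ℝ) - c'| + 1 - k) ⊆ Iic (b * log (2 * δ)) := by
    have hk : k = -(b * log (2 * δ)) + GS + 1 := by simp only [k, one_div, log_inv]; ring
    exact Iio_subset_Iic_self.trans (Iic_subset_Iic.mpr (by linarith))
  have htail : laplaceMeasure b (Iic (b * log (2 * δ))) ≤ ENNReal.ofReal δ := by
    refine (laplaceMeasure_Iic_le hb _).trans_eq ?_
    rw [mul_div_cancel_left₀ _ hb.ne', exp_log (by positivity)]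
    ring_nf
  have hcost : ENNReal.ofReal (exp (|(c : ℝ) - c'| / b)) ≤ ENNReal.ofReal (exp ε) := by
    gcongr
    have hεb : ε * b = GS := by simp only [b]; field_simp
    rwa [div_le_iff₀ hb, hεb]
  have hA' : MeasurableSet {z | dpLen c' k z ∈ S} := measurable_dpLen c' k .of_discrete
  have hsub := (setOf_dpLen_mem_subset c c' k S).trans (union_subset_union_left _ hclip)
  calc laplaceMeasure b {z | dpLen c k z ∈ S}
      ≤ laplaceMeasure b (Iic (b * log (2 * δ)))
          + laplaceMeasure b ((· + ((c : ℝ) - c')) ⁻¹' {z | dpLen c' k z ∈ S}) :=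
        (measure_mono hsub).trans (measure_union_le _ _)
    _ ≤ ENNReal.ofReal δ + ENNReal.ofReal (exp ε) * laplaceMeasure b {z | dpLen c' k z ∈ S} := by
        gcongr
        exact (laplaceMeasure_preimage_add_le hb.le _ hA').trans (by gcongr)
    _ = _ := add_comm _ _

/-- Theorem: `DPCompress` is `(ε,δ)`-differentially private.
`Compress` is any compression scheme whose global sensitivity is (at most) the
finite value `GS`; `Z ∼ Lap(GS/ε)`, `k = (GS/ε)·ln(1/(2δ)) + GS + 1`, and the
output length is `|Compress(w)| + max{1, ⌈Z + k⌉}`.  For every `n ≥ 1`, every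
pair of neighboring strings `w ∼ w' ∈ Σⁿ` and every `S ⊆ ℕ`,
`Pr[|A(w)| ∈ S] ≤ e^ε · Pr[|A(w')| ∈ S] + δ`. -/
theorem dpcompress_is_dp {α β : Type*} (n : ℕ) (hn : 1 ≤ n)
    (Compress : (ℕ → α) → List β) (GS : ℕ) (hGSpos : 0 < GS)
    (hGS : ∀ w w' : ℕ → α, Neighbor n w w' →
      |((Compress w).length : ℤ) - ((Compress w').length : ℤ)| ≤ (GS : ℤ))
    (ε δ : ℝ) (hε : 0 < ε) (hδ0 : 0 < δ) (hδ1 : δ < 1)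
    (w w' : ℕ → α) (hnb : Neighbor n w w') (S : Set ℕ) :
    laplaceMeasure ((GS : ℝ) / ε)
        {z : ℝ | dpLen (Compress w).length
            ((GS : ℝ) / ε * Real.log (1 / (2 * δ)) + GS + 1) z ∈ S}
      ≤ ENNReal.ofReal (Real.exp ε) *
          laplaceMeasure ((GS : ℝ) / ε)
            {z : ℝ | dpLen (Compress w').length
                ((GS : ℝ) / ε * Real.log (1 / (2 * δ)) + GS + 1) z ∈ S}
        + ENNReal.ofReal δ :=
  dpcompress_is_dp_general n Compress GS hGSpos hGS ε δ hε hδ0 w w' hnb S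
end

section
/- Let w ∼ w' ∈ Σⁿ be neighboring strings, and let (B₁,…,B_t) = Compress(w) and (B'₁,…,B'_{t'}) = Compress(w') be their LZ77 block decompositions. Then for every i ∈ [t], the set M_i = {k ∈ [t'] : s_i ≤ s'_k ≤ f_i} is either empty or an interval [i₁, i₂] of indices with i₁ ≤ i₂ ≤ i₁ + 1. In particular, |M_i| ≤ 2 for all i ∈ [t]. -/
/-- A single LZ77 block `[q, len, c]`. -/
structure LZBlock (α : Type*) where
  q : ℕ
  len : ℕ
  c : α

/-- `s_i` (1-indexed start position of the `i`-th block, `i` 0-indexed). -/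
def blockStart {α : Type*} (B : List (LZBlock α)) (i : ℕ) : ℕ :=
  1 + ((B.take i).map (fun b => b.len + 1)).sum

/-- `f_i` (1-indexed final position of the `i`-th block, `i` 0-indexed). -/
def blockFin {α : Type*} (B : List (LZBlock α)) (i : ℕ) : ℕ :=
  ((B.take (i + 1)).map (fun b => b.len + 1)).sum

/-- `ℓ_i`, recovered as `f_i - s_i`. -/
def lenAt {α : Type*} (B : List (LZBlock α)) (i : ℕ) : ℕ :=
  blockFin B i - blockStart B i

/-- Non-overlapping LZ77 parse, sliding window `W`, of the length-`n` string `w`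
(1-indexed positions). -/
def IsLZ77Parse {α : Type*} (W n : ℕ) (w : ℕ → α) (B : List (LZBlock α)) : Prop :=
  ((B.map (fun b => b.len + 1)).sum = n) ∧
  ∀ i : Fin B.length,
    ((B.get i).c = w (blockStart B i.1 + (B.get i).len)) ∧
    ((B.get i).len = 0 → (B.get i).q = 0) ∧
    (0 < (B.get i).len →
      1 ≤ (B.get i).q ∧
      blockStart B i.1 ≤ (B.get i).q + W ∧
      (B.get i).q + (B.get i).len ≤ blockStart B i.1 ∧
      ∀ d < (B.get i).len, w ((B.get i).q + d) = w (blockStart B i.1 + d)) ∧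
    (blockStart B i.1 + (B.get i).len + 1 ≤ n →
      ¬ ∃ q', 1 ≤ q' ∧ blockStart B i.1 ≤ q' + W ∧
          q' + (B.get i).len + 1 ≤ blockStart B i.1 ∧
          ∀ d ≤ (B.get i).len, w (q' + d) = w (blockStart B i.1 + d))

/-- LZ77 parse with self-referencing (unbounded window). -/
def IsLZ77SRParse {α : Type*} (n : ℕ) (w : ℕ → α) (B : List (LZBlock α)) : Prop :=
  ((B.map (fun b => b.len + 1)).sum = n) ∧
  ∀ i : Fin B.length,
    ((B.get i).c = w (blockStart B i.1 + (B.get i).len)) ∧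
    ((B.get i).len = 0 → (B.get i).q = 0) ∧
    (0 < (B.get i).len →
      1 ≤ (B.get i).q ∧
      (B.get i).q < blockStart B i.1 ∧
      ∀ d < (B.get i).len, w ((B.get i).q + d) = w (blockStart B i.1 + d)) ∧
    (blockStart B i.1 + (B.get i).len + 1 ≤ n →
      ¬ ∃ q', 1 ≤ q' ∧ q' < blockStart B i.1 ∧
          ∀ d ≤ (B.get i).len, w (q' + d) = w (blockStart B i.1 + d))

/-- `M_i`: the set of (0-indexed) blocks of `B'` that start inside block `i` of `B`. -/
def Mset {α : Type*} (B B' : List (LZBlock α)) (i : ℕ) : Finset ℕ :=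
  (Finset.range B'.length).filter
    (fun k => blockStart B i ≤ blockStart B' k ∧ blockStart B' k ≤ blockFin B i)

/-- Indices of type-`m` blocks of `B` (relative to `B'`). -/
def typeSet {α : Type*} (B B' : List (LZBlock α)) (m : ℕ) : Finset ℕ :=
  (Finset.range B.length).filter (fun i => (Mset B B' i).card = m)

/-- Number of bits used to encode each block. -/
def codeLen (n cardS : ℕ) : ℕ :=
  2 * Nat.clog 2 n + Nat.clog 2 cardS


section LZAux

variable {α : Type*}

lemma blockStart_succ (B : List (LZBlock α)) (k : ℕ) (hk : k < B.length) :
    blockStart B (k + 1) = blockStart B k + (B.get ⟨k, hk⟩).len + 1 := by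
  unfold blockStart
  rw [List.take_succ, List.map_append, List.sum_append]
  simp [List.getElem?_eq_getElem hk]
  omega

lemma blockStart_le_succ (B : List (LZBlock α)) (k : ℕ) :
    blockStart B k ≤ blockStart B (k + 1) := by
  unfold blockStart
  rw [List.take_succ, List.map_append, List.sum_append]
  omega

lemma blockStart_mono (B : List (LZBlock α)) : Monotone (blockStart B) :=
  monotone_nat_of_le_succ (blockStart_le_succ B)

lemma blockStart_succ_fin (B : List (LZBlock α)) (k : ℕ) :
    blockStart B (k + 1) = blockFin B k + 1 := by
  unfold blockStart blockFin; omega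

lemma blockFin_le_sum (B : List (LZBlock α)) (i : ℕ) :
    blockFin B i ≤ (B.map (fun b => b.len + 1)).sum := by
  unfold blockFin
  have h := List.sum_take_add_sum_drop (B.map fun b => b.len + 1) (i + 1)
  rw [List.map_take]
  omega

lemma mem_Mset {B B' : List (LZBlock α)} {i k : ℕ} :
    k ∈ Mset B B' i ↔ k < B'.length ∧ blockStart B i ≤ blockStart B' k ∧
      blockStart B' k ≤ blockFin B i := by
  simp [Mset, Finset.mem_filter, Finset.mem_range]

private lemma core {α : Type*} (n : ℕ) (w w' : ℕ → α) (j si L qi s1 l1 l2 : ℕ)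
    (hw : ∀ x, x ≠ j → w x = w' x)
    (hq1 : 1 ≤ qi) (hqL : qi + L ≤ si)
    (hcopy : ∀ d < L, w (qi + d) = w (si + d))
    (hsin : si + L ≤ n)
    (h1 : si ≤ s1)
    (h3 : s1 + l1 + 1 + l2 + 1 ≤ si + L)
    (hm1 : s1 + l1 + 1 ≤ n →
      ¬ ∃ q', 1 ≤ q' ∧ s1 ≤ q' + n ∧ q' + l1 + 1 ≤ s1 ∧
        ∀ d ≤ l1, w' (q' + d) = w' (s1 + d))
    (hm2 : s1 + l1 + 1 + l2 + 1 ≤ n →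
      ¬ ∃ q', 1 ≤ q' ∧ s1 + l1 + 1 ≤ q' + n ∧ q' + l2 + 1 ≤ s1 + l1 + 1 ∧
        ∀ d ≤ l2, w' (q' + d) = w' (s1 + l1 + 1 + d)) : False := by
  obtain ⟨e1, rfl⟩ := Nat.exists_eq_add_of_le h1
  by_cases hj : (qi + e1 + l1 + 1 ≤ j ∧ j ≤ qi + e1 + l1 + 1 + l2) ∨
      (si + e1 + l1 + 1 ≤ j ∧ j ≤ si + e1 + l1 + 1 + l2)
  · -- the mismatch lies in the windows of the middle block: contradict block k
    apply hm1 (by omega)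
    refine ⟨qi + e1, by omega, by omega, by omega, fun d hd => ?_⟩
    have hc := hcopy (e1 + d) (by omega)
    simp only [← add_assoc] at hc
    have ha : w' (qi + e1 + d) = w (qi + e1 + d) := (hw _ (by omega)).symm
    have hb : w (si + e1 + d) = w' (si + e1 + d) := hw _ (by omega)
    rw [ha, hc, hb]
  · -- the mismatch avoids the windows of the middle block: contradict block k+1
    apply hm2 (by omega)
    refine ⟨qi + e1 + l1 + 1, by omega, by omega, by omega, fun d hd => ?_⟩
    have hc := hcopy (e1 + l1 + 1 + d) (by omega)
    simp only [← add_assoc] at hc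
    have ha : w' (qi + e1 + l1 + 1 + d) = w (qi + e1 + l1 + 1 + d) :=
      (hw _ (by omega)).symm
    have hb : w (si + e1 + l1 + 1 + d) = w' (si + e1 + l1 + 1 + d) := hw _ (by omega)
    rw [ha, hc, hb]

private lemma no_three {α : Type*} (n : ℕ) (w w' : ℕ → α)
    (hnb : Neighbor n w w') (B B' : List (LZBlock α))
    (hB : IsLZ77Parse n n w B) (hB' : IsLZ77Parse n n w' B')
    (i k : ℕ) (hi : i < B.length) (hk2 : k + 2 < B'.length)
    (h1 : blockStart B i ≤ blockStart B' k)
    (h3 : blockStart B' (k + 2) ≤ blockFin B i) : False := by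
  obtain ⟨j, -, -, -, hw⟩ := hnb
  have hk1 : k + 1 < B'.length := by omega
  have hk0 : k < B'.length := by omega
  have e2 : blockStart B' (k + 1) = blockStart B' k + (B'.get ⟨k, hk0⟩).len + 1 :=
    blockStart_succ B' k hk0
  have e3 : blockStart B' (k + 2) =
      blockStart B' (k + 1) + (B'.get ⟨k + 1, hk1⟩).len + 1 :=
    blockStart_succ B' (k + 1) hk1
  have efin : blockFin B i = blockStart B i + (B.get ⟨i, hi⟩).len := by
    have h := blockStart_succ B i hi
    have h2 := blockStart_succ_fin B i
    omega
  have hfn : blockFin B i ≤ n := hB.1 ▸ blockFin_le_sum B i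
  have hLpos : 0 < (B.get ⟨i, hi⟩).len := by omega
  obtain ⟨-, -, hcp, -⟩ := hB.2 ⟨i, hi⟩
  obtain ⟨hq1, -, hqL, hcopy⟩ := hcp hLpos
  have hm1 : blockStart B' k + (B'.get ⟨k, hk0⟩).len + 1 ≤ n →
      ¬ ∃ q', 1 ≤ q' ∧ blockStart B' k ≤ q' + n ∧
        q' + (B'.get ⟨k, hk0⟩).len + 1 ≤ blockStart B' k ∧
        ∀ d ≤ (B'.get ⟨k, hk0⟩).len, w' (q' + d) = w' (blockStart B' k + d) :=
    (hB'.2 ⟨k, hk0⟩).2.2.2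
  have hm2 : blockStart B' (k + 1) + (B'.get ⟨k + 1, hk1⟩).len + 1 ≤ n →
      ¬ ∃ q', 1 ≤ q' ∧ blockStart B' (k + 1) ≤ q' + n ∧
        q' + (B'.get ⟨k + 1, hk1⟩).len + 1 ≤ blockStart B' (k + 1) ∧
        ∀ d ≤ (B'.get ⟨k + 1, hk1⟩).len, w' (q' + d) = w' (blockStart B' (k + 1) + d) :=
    (hB'.2 ⟨k + 1, hk1⟩).2.2.2
  rw [e2] at hm2
  exact core n w w' j (blockStart B i) ((B.get ⟨i, hi⟩).len) ((B.get ⟨i, hi⟩).q)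
    (blockStart B' k) ((B'.get ⟨k, hk0⟩).len) ((B'.get ⟨k + 1, hk1⟩).len)
    hw hq1 hqL hcopy (by omega) h1 (by omega) hm1 hm2

end LZAux

/-- Lemma: start-inside structure.
For neighboring strings `w ∼ w'` with LZ77 block decompositions `B` and `B'`
(unbounded window `W = n`), for every block index `i` of `B`, the set
`M_i = {k : s_i ≤ s'_k ≤ f_i}` is either empty or an interval `[i₁, i₂]` with
`i₁ ≤ i₂ ≤ i₁ + 1`; in particular `|M_i| ≤ 2`. -/
theorem lz77_start_inside {α : Type*} (n : ℕ) (w w' : ℕ → α)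
    (hnb : Neighbor n w w')
    (B B' : List (LZBlock α))
    (hB : IsLZ77Parse n n w B) (hB' : IsLZ77Parse n n w' B') :
    ∀ i < B.length,
      (Mset B B' i = ∅ ∨
        ∃ i₁ i₂ : ℕ, i₁ ≤ i₂ ∧ i₂ ≤ i₁ + 1 ∧ Mset B B' i = Finset.Icc i₁ i₂) ∧
      (Mset B B' i).card ≤ 2 := by
  intro i hi
  rcases eq_or_ne (Mset B B' i) ∅ with hM | hM
  · exact ⟨Or.inl hM, by simp [hM]⟩
  have hne : (Mset B B' i).Nonempty := Finset.nonempty_iff_ne_empty.mpr hM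
  have hmin := mem_Mset.mp ((Mset B B' i).min'_mem hne)
  have hmax := mem_Mset.mp ((Mset B B' i).max'_mem hne)
  have hIcc : Mset B B' i =
      Finset.Icc ((Mset B B' i).min' hne) ((Mset B B' i).max' hne) := by
    ext m
    simp only [Finset.mem_Icc]
    constructor
    · intro hm; exact ⟨Finset.min'_le _ _ hm, Finset.le_max' _ _ hm⟩
    · rintro ⟨ha, hb⟩
      refine mem_Mset.mpr ⟨lt_of_le_of_lt hb hmax.1, ?_, ?_⟩
      · exact le_trans hmin.2.1 (blockStart_mono B' ha)
      · exact le_trans (blockStart_mono B' hb) hmax.2.2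
  have hle : (Mset B B' i).min' hne ≤ (Mset B B' i).max' hne :=
    Finset.min'_le _ _ ((Mset B B' i).max'_mem hne)
  have h2 : (Mset B B' i).max' hne ≤ (Mset B B' i).min' hne + 1 := by
    by_contra hcon
    have hmem : (Mset B B' i).min' hne + 2 ∈ Mset B B' i :=
      (Finset.ext_iff.mp hIcc _).mpr (Finset.mem_Icc.mpr ⟨by omega, by omega⟩)
    obtain ⟨hl, hs, hf⟩ := mem_Mset.mp hmem
    exact no_three n w w' hnb B B' hB hB' i _ hi hl hmin.2.1 hf
  refine ⟨Or.inr ⟨_, _, hle, h2, hIcc⟩, ?_⟩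
  rw [hIcc, Nat.card_Icc]
  omega
end

section
/- Let w ∼ w' ∈ Σⁿ be neighboring strings with w[j] ≠ w'[j], compressed by LZ77 with unbounded sliding window. If block B_i = [q_i, ℓ_i, c_i] of Compress(w) is a type-2 block, then either (1) s_i ≤ j ≤ f_i, or (2) j − ℓ_i < q_i ≤ j. -/
private lemma aux_sum_take_le (l : List ℕ) (m : ℕ) : (l.take m).sum ≤ l.sum := by
  conv_rhs => rw [← List.take_append_drop m l]
  rw [List.sum_append]
  exact Nat.le_add_right _ _

private lemma aux_sum_take_mono (l : List ℕ) {a b : ℕ} (h : a ≤ b) :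
    (l.take a).sum ≤ (l.take b).sum := by
  have : l.take a = (l.take b).take a := by
    rw [List.take_take, Nat.min_eq_left h]
  rw [this]
  exact aux_sum_take_le _ _

private lemma blockStart_mono_s7 {α : Type*} (B : List (LZBlock α)) {a b : ℕ} (h : a ≤ b) :
    blockStart B a ≤ blockStart B b := by
  unfold blockStart
  have := aux_sum_take_mono (B.map (fun b => b.len + 1)) h
  simpa [List.map_take] using Nat.add_le_add_left this 1

private lemma blockFin_eq {α : Type*} (B : List (LZBlock α)) (i : ℕ) (h : i < B.length) :
    blockFin B i = blockStart B i + (B.get ⟨i, h⟩).len := by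
  unfold blockFin blockStart
  rw [List.map_take, List.map_take,
    List.sum_take_succ _ i (by simpa using h), List.getElem_map]
  simp only [List.get_eq_getElem]
  omega

private lemma blockStart_succ_s7 {α : Type*} (B : List (LZBlock α)) (i : ℕ) :
    blockStart B (i + 1) = blockFin B i + 1 := by
  unfold blockStart blockFin; omega

private lemma blockFin_le {α : Type*} (B : List (LZBlock α)) (i : ℕ) :
    blockFin B i ≤ (B.map (fun b => b.len + 1)).sum := by
  unfold blockFin
  rw [List.map_take]
  exact aux_sum_take_le _ _

/-- Claim: location of type-2 blocks.
Let `w ∼ w'` differ exactly at position `j`, compressed by LZ77 with unbounded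
window. If block `B_i = [q_i, ℓ_i, c_i]` of `Compress(w)` is a type-2 block, then
either (1) `s_i ≤ j ≤ f_i`, or (2) `j − ℓ_i < q_i ≤ j`. -/
theorem lz77_typeTwo_location {α : Type*} (n : ℕ) (w w' : ℕ → α) (j : ℕ)
    (hj1 : 1 ≤ j) (hjn : j ≤ n) (hdiff : w j ≠ w' j)
    (hagree : ∀ i, i ≠ j → w i = w' i)
    (B B' : List (LZBlock α))
    (hB : IsLZ77Parse n n w B) (hB' : IsLZ77Parse n n w' B')
    (i : ℕ) (hi : i < B.length)
    (htwo : (Mset B B' i).card = 2) :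
    (blockStart B i ≤ j ∧ j ≤ blockFin B i) ∨
      ((j : ℤ) - ((B.get ⟨i, hi⟩).len : ℤ) < ((B.get ⟨i, hi⟩).q : ℤ)
        ∧ (B.get ⟨i, hi⟩).q ≤ j) := by
  by_contra hcon
  push_neg at hcon
  obtain ⟨h1, h2⟩ := hcon
  set q := (B.get ⟨i, hi⟩).q with hqdef
  set L := (B.get ⟨i, hi⟩).len with hLdef
  set s := blockStart B i with hsdef
  have hf : blockFin B i = s + L := blockFin_eq B i hi
  -- extract two ordered elements of Mset
  have h2card : 1 < (Mset B B' i).card := by omega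
  obtain ⟨ka, hka, kb, hkb, hlt⟩ :
      ∃ a ∈ Mset B B' i, ∃ b ∈ Mset B B' i, a < b := by
    obtain ⟨a, ha, b, hb, hab⟩ := Finset.one_lt_card.mp h2card
    rcases Nat.lt_or_ge a b with h | h
    · exact ⟨a, ha, b, hb, h⟩
    · exact ⟨b, hb, a, ha, lt_of_le_of_ne h (Ne.symm hab)⟩
  rw [Mset, Finset.mem_filter, Finset.mem_range] at hka hkb
  obtain ⟨hkaLen, hsa1, hsa2⟩ := hka
  obtain ⟨hkbLen, hsb1, hsb2⟩ := hkb
  set sa := blockStart B' ka with hsadef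
  set sb := blockStart B' kb with hsbdef
  set La := (B'.get ⟨ka, hkaLen⟩).len with hLadef
  have hfa : blockFin B' ka = sa + La := blockFin_eq B' ka hkaLen
  have hchain : sa + La + 1 ≤ sb := by
    have h1' : blockStart B' (ka + 1) = sa + La + 1 := by
      rw [blockStart_succ_s7, hfa]
    have h2' : blockStart B' (ka + 1) ≤ sb := blockStart_mono_s7 B' hlt
    omega
  -- hence L > 0
  have hLpos : 0 < L := by omega
  -- facts about block i of B
  obtain ⟨hBsum, hBall⟩ := hB
  have hBi := hBall ⟨i, hi⟩
  simp only [Fin.val_mk] at hBi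
  obtain ⟨_, _, hBcopy, _⟩ := hBi
  obtain ⟨hq1, _, hqs, hcopy⟩ := hBcopy hLpos
  -- f ≤ n
  have hfn : s + L ≤ n := by
    have := blockFin_le B i
    rw [hf, hBsum] at this; exact this
  -- j is outside [s, s+L] ... from h1
  have hjout : ∀ e ≤ L, s + e ≠ j := by
    intro e he heq
    have := h1 (by omega)
    omega
  -- j is outside [q, q+L-1] ... from h2
  have hjoutq : ∀ e < L, q + e ≠ j := by
    intro e he heq
    rcases Nat.lt_or_ge j q with h | h
    · omega
    · have : (j : ℤ) - (L : ℤ) < (q : ℤ) := by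
        push_cast; omega
      have := h2 this
      omega
  -- maximality of block ka of B'
  obtain ⟨hB'sum, hB'all⟩ := hB'
  have hB'a := hB'all ⟨ka, hkaLen⟩
  simp only [Fin.val_mk] at hB'a
  obtain ⟨_, _, _, hmax⟩ := hB'a
  have hfan : sa + La + 1 ≤ n := by
    have : sb ≤ s + L := by rw [← hf]; exact hsb2
    omega
  rw [← hsadef, ← hLadef] at hmax
  have hsb2' : sb ≤ s + L := by rw [← hf]; exact hsb2
  refine hmax (by omega) ⟨q + (sa - s), by omega, by omega, by omega, ?_⟩
  intro d hd
  have hssa : s ≤ sa := hsa1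
  have heL : (sa - s) + d < L := by omega
  have e1 : q + (sa - s) + d = q + ((sa - s) + d) := by omega
  have e2 : sa + d = s + ((sa - s) + d) := by omega
  rw [e1, e2]
  have heL' : (sa - s) + d < (B.get ⟨i, hi⟩).len := by rw [← hLdef]; exact heL
  calc w' (q + ((sa - s) + d)) = w (q + ((sa - s) + d)) :=
        (hagree _ (hjoutq _ heL)).symm
    _ = w (s + ((sa - s) + d)) := by rw [hqdef, hsdef]; exact hcopy _ heL'
    _ = w' (s + ((sa - s) + d)) := hagree _ (hjout _ (by omega))
end

section
/- Let x : ℕ → ℕ be finitely supported, let n ≥ 1, and suppose there exists ℓ* ∈ ℕ such that x(ℓ) ≤ ℓ for every ℓ ≠ ℓ* and x(ℓ*) ≤ ℓ* + 1. If Σ_ℓ x(ℓ)·(ℓ + 1) ≤ n, then Σ_ℓ x(ℓ) ≤ (∛9/2)·n^{2/3} + (∛3/2)·n^{1/3} + 1. -/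
open Finset

private lemma triple_sum (N : ℕ) :
    6 * ∑ T ∈ Finset.range N, (∑ i ∈ Finset.range T, i) = N * (N - 1) * (N - 2) := by
  induction N with
  | zero => simp
  | succ M ih =>
    rw [Finset.sum_range_succ, Nat.mul_add, ih]
    have h2 : (∑ i ∈ Finset.range M, i) * 2 = M * (M - 1) := Finset.sum_range_id_mul_two M
    match M with
    | 0 => simp
    | 1 => simp [Finset.sum_range_succ]
    | (M+2) =>
      simp only [Nat.add_sub_cancel, show M + 2 - 1 = M + 1 from rfl,
        show M + 3 - 1 = M + 2 from rfl, show M + 3 - 2 = M + 1 from rfl,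
        show M + 2 + 1 = M + 3 from rfl] at *
      nlinarith [h2]

set_option maxHeartbeats 1000000 in
/-- the optimization step in the type-2 block count.
Let `x : ℕ → ℕ` be finitely supported (a `Finsupp`), `n ≥ 1`, and suppose there
is `ℓ*` with `x ℓ ≤ ℓ` for all `ℓ ≠ ℓ*` and `x ℓ* ≤ ℓ* + 1`. If
`Σ_ℓ x ℓ · (ℓ + 1) ≤ n` then `Σ_ℓ x ℓ ≤ (∛9/2)·n^(2/3) + (∛3/2)·n^(1/3) + 1`. -/
theorem sum_le_of_len_constraints (x : ℕ →₀ ℕ) (n : ℕ) (hn : 1 ≤ n)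
    (ℓstar : ℕ)
    (hx : ∀ ℓ : ℕ, ℓ ≠ ℓstar → x ℓ ≤ ℓ)
    (hxstar : x ℓstar ≤ ℓstar + 1)
    (hsum : (x.sum fun ℓ v => v * (ℓ + 1)) ≤ n) :
    ((x.sum fun _ v => v : ℕ) : ℝ) ≤
      (9 : ℝ) ^ ((1 : ℝ) / 3) / 2 * (n : ℝ) ^ ((2 : ℝ) / 3)
        + (3 : ℝ) ^ ((1 : ℝ) / 3) / 2 * (n : ℝ) ^ ((1 : ℝ) / 3) + 1 := by
  classical
  have hRpos : (0:ℝ) ≤ (9:ℝ)^((1:ℝ)/3)/2 * (n:ℝ)^((2:ℝ)/3)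
      + (3:ℝ)^((1:ℝ)/3)/2 * (n:ℝ)^((1:ℝ)/3) := by positivity
  obtain ⟨S, hSdef⟩ : ∃ S : ℕ, (x.sum fun _ v => v) = S := ⟨_, rfl⟩
  rw [hSdef]
  have hsupp : S = ∑ ℓ ∈ x.support, x ℓ := hSdef.symm
  have hsum' : (∑ ℓ ∈ x.support, x ℓ * (ℓ + 1)) ≤ n := hsum
  clear hSdef hsum
  -- generic bound on partial sums of x
  have hpart : ∀ s : Finset ℕ, (∑ ℓ ∈ s, x ℓ) ≤ (∑ ℓ ∈ s, ℓ) + 1 := by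
    intro s
    by_cases hst : ℓstar ∈ s
    · rw [← Finset.sum_erase_add s _ hst, ← Finset.sum_erase_add s (fun ℓ => ℓ) hst]
      have : ∑ ℓ ∈ s.erase ℓstar, x ℓ ≤ ∑ ℓ ∈ s.erase ℓstar, ℓ :=
        Finset.sum_le_sum (fun ℓ hℓ => hx ℓ (Finset.ne_of_mem_erase hℓ))
      omega
    · have : (∑ ℓ ∈ s, x ℓ) ≤ ∑ ℓ ∈ s, ℓ :=
        Finset.sum_le_sum (fun ℓ hℓ => hx ℓ (fun h => hst (h ▸ hℓ)))
      omega
  by_cases hS1 : S ≤ 1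
  · have : (S:ℝ) ≤ 1 := by exact_mod_cast hS1
    linarith
  push_neg at hS1
  obtain ⟨m, hmS⟩ : ∃ m : ℕ, S = m + 1 := ⟨S - 1, by omega⟩
  have hm1 : 1 ≤ m := by omega
  -- choose k with k(k+1) < 2m ≤ (k+1)(k+2)
  have hex : (fun j => j*(j+1) < 2*m) 0 := by show 0*(0+1) < 2*m; omega
  obtain ⟨k, hk1, hk2⟩ : ∃ k : ℕ, k*(k+1) < 2*m ∧ 2*m ≤ (k+1)*(k+2) := by
    refine ⟨Nat.findGreatest (fun j => j*(j+1) < 2*m) (2*m), ?_, ?_⟩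
    · exact Nat.findGreatest_spec (P := fun j => j*(j+1) < 2*m) (Nat.zero_le _) hex
    · set K := Nat.findGreatest (fun j => j*(j+1) < 2*m) (2*m) with hKd
      have hspec : K*(K+1) < 2*m :=
        Nat.findGreatest_spec (P := fun j => j*(j+1) < 2*m) (Nat.zero_le _) hex
      by_contra h
      push_neg at h
      have hle : K+1 ≤ 2*m := by nlinarith
      have : K+1 ≤ K := Nat.le_findGreatest hle h
      omega
  -- lemma A : for every T, S ≤ (tail sum) + (∑ i < T, i) + 1
  have lemA : ∀ T : ℕ,
      S ≤ (∑ ℓ ∈ x.support.filter (fun ℓ => T ≤ ℓ), x ℓ)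
          + (∑ i ∈ Finset.range T, i) + 1 := by
    intro T
    have hsplit : S = (∑ ℓ ∈ x.support.filter (fun ℓ => T ≤ ℓ), x ℓ)
        + (∑ ℓ ∈ x.support.filter (fun ℓ => ¬ T ≤ ℓ), x ℓ) := by
      rw [hsupp, (Finset.sum_filter_add_sum_filter_not x.support (fun ℓ => T ≤ ℓ) _)]
    have hsub : x.support.filter (fun ℓ => ¬ T ≤ ℓ) ⊆ Finset.range T := by
      intro ℓ hℓ
      simp only [Finset.mem_filter] at hℓ
      exact Finset.mem_range.mpr (by omega)
    have h1 := hpart (x.support.filter (fun ℓ => ¬ T ≤ ℓ))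
    have h2 : (∑ ℓ ∈ x.support.filter (fun ℓ => ¬ T ≤ ℓ), ℓ) ≤ ∑ i ∈ Finset.range T, i :=
      Finset.sum_le_sum_of_subset hsub
    omega
  -- lemma B : double counting
  have lemB : (∑ T ∈ Finset.range (k+2),
      ∑ ℓ ∈ x.support.filter (fun ℓ => T ≤ ℓ), x ℓ) ≤ n := by
    have e1 : (∑ T ∈ Finset.range (k+2),
        ∑ ℓ ∈ x.support.filter (fun ℓ => T ≤ ℓ), x ℓ)
        = ∑ ℓ ∈ x.support, ∑ T ∈ Finset.range (k+2), if T ≤ ℓ then x ℓ else 0 := by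
      rw [Finset.sum_comm]
      exact Finset.sum_congr rfl (fun ℓ _ => by rw [Finset.sum_filter])
    rw [e1]
    have e2 : ∀ ℓ ∈ x.support,
        (∑ T ∈ Finset.range (k+2), if T ≤ ℓ then x ℓ else 0) ≤ x ℓ * (ℓ+1) := by
      intro ℓ _
      rw [← Finset.sum_filter, Finset.sum_const]
      have hc : ((Finset.range (k+2)).filter (fun T => T ≤ ℓ)).card ≤ ℓ + 1 := by
        have hss : (Finset.range (k+2)).filter (fun T => T ≤ ℓ) ⊆ Finset.range (ℓ+1) := by
          intro T hT
          simp only [Finset.mem_filter, Finset.mem_range] at hT ⊢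
          omega
        simpa using Finset.card_le_card hss
      calc ((Finset.range (k+2)).filter (fun T => T ≤ ℓ)).card • x ℓ
          = ((Finset.range (k+2)).filter (fun T => T ≤ ℓ)).card * x ℓ := by
            rw [smul_eq_mul]
        _ ≤ (ℓ+1) * x ℓ := Nat.mul_le_mul_right _ hc
        _ = x ℓ * (ℓ+1) := Nat.mul_comm _ _
    calc (∑ ℓ ∈ x.support, ∑ T ∈ Finset.range (k+2), if T ≤ ℓ then x ℓ else 0)
        ≤ ∑ ℓ ∈ x.support, x ℓ * (ℓ+1) := Finset.sum_le_sum e2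
      _ ≤ n := hsum'
  -- combine
  have hmain : (k+2) * S ≤ n + (∑ T ∈ Finset.range (k+2), ∑ i ∈ Finset.range T, i)
      + (k+2) := by
    have h1 : (k+2) * S ≤ ∑ T ∈ Finset.range (k+2),
        ((∑ ℓ ∈ x.support.filter (fun ℓ => T ≤ ℓ), x ℓ)
          + (∑ i ∈ Finset.range T, i) + 1) := by
      calc (k+2) * S = ∑ _T ∈ Finset.range (k+2), S := by
            rw [Finset.sum_const, Finset.card_range, smul_eq_mul]
        _ ≤ _ := Finset.sum_le_sum (fun T _ => lemA T)
    rw [Finset.sum_add_distrib, Finset.sum_add_distrib, Finset.sum_const,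
      Finset.card_range, smul_eq_mul, mul_one] at h1
    omega
  have htriple := triple_sum (k+2)
  have hnat : 6 * (k+2) * m ≤ 6 * n + k * (k+1) * (k+2) := by
    rw [show k + 2 - 1 = k + 1 from rfl, show k + 2 - 2 = k from rfl] at htriple
    nlinarith [hmain, htriple]
  clear hmain htriple lemA lemB hsupp hsum' hpart hex hx hxstar
  -- real part
  obtain ⟨K, hK⟩ : ∃ K : ℝ, K = ((3*n : ℕ) : ℝ) ^ ((1:ℝ)/3) := ⟨_, rfl⟩
  have hn0 : (0:ℝ) ≤ ((3*n : ℕ) : ℝ) := by positivity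
  have hKcube : K ^ 3 = (3*n : ℕ) := by
    rw [hK, ← Real.rpow_natCast (((3*n : ℕ):ℝ) ^ ((1:ℝ)/3)) 3, ← Real.rpow_mul hn0]
    norm_num
  have hK0 : 0 ≤ K := hK ▸ Real.rpow_nonneg hn0 _
  obtain ⟨t, ht⟩ : ∃ t : ℝ, t = (Real.sqrt (8*(m:ℝ)+1) - 1)/2 := ⟨_, rfl⟩
  have hsq : Real.sqrt (8*(m:ℝ)+1) ^ 2 = 8*(m:ℝ)+1 := by
    rw [Real.sq_sqrt]; positivity
  have hsq1 : 1 ≤ Real.sqrt (8*(m:ℝ)+1) := by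
    nlinarith [Real.sqrt_nonneg (8*(m:ℝ)+1), hsq,
      (by exact_mod_cast hm1 : (1:ℝ) ≤ (m:ℝ))]
  have ht0 : 0 ≤ t := by rw [ht]; linarith
  have htm : t^2 + t = 2*(m:ℝ) := by
    rw [ht]; nlinarith [hsq]
  have hmR1 : (k:ℝ)*((k:ℝ)+1) < 2*(m:ℝ) := by exact_mod_cast hk1
  have hmR2 : 2*(m:ℝ) ≤ ((k:ℝ)+1)*((k:ℝ)+2) := by exact_mod_cast hk2
  have hkR : (0:ℝ) ≤ (k:ℝ) := Nat.cast_nonneg k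
  have hkt : (k:ℝ) ≤ t := by
    nlinarith [htm, hmR1, ht0, hkR, sq_nonneg (t - (k:ℝ))]
  have htk1 : t ≤ (k:ℝ)+1 := by
    nlinarith [htm, hmR2, ht0, hkR, sq_nonneg (t - ((k:ℝ)+1))]
  have hnatR : 6*((k:ℝ)+2)*(m:ℝ) ≤ 6*(n:ℝ) + (k:ℝ)*((k:ℝ)+1)*((k:ℝ)+2) := by
    exact_mod_cast hnat
  have hK3 : K^3 = 3*(n:ℝ) := by rw [hKcube]; push_cast; ring
  have hcube : 2*t^3 ≤ 2*K^3 := by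
    have key : 2*t^3 ≤ 3*((k:ℝ)+2)*(t^2+t) - (k:ℝ)*((k:ℝ)+1)*((k:ℝ)+2) := by
      nlinarith [mul_nonneg (sub_nonneg.mpr hkt) (sub_nonneg.mpr htk1),
        mul_nonneg (mul_nonneg (sub_nonneg.mpr hkt) (sub_nonneg.mpr hkt)) (sub_nonneg.mpr htk1),
        mul_nonneg (sub_nonneg.mpr hkt) (mul_nonneg (sub_nonneg.mpr htk1) (sub_nonneg.mpr htk1)),
        Nat.cast_nonneg (α := ℝ) k, ht0, sq_nonneg (t - k), sq_nonneg ((k:ℝ)+1 - t)]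
    rw [htm] at key
    linarith [hnatR]
  have htK : t ≤ K := by
    nlinarith [hcube, ht0, hK0, sq_nonneg (t - K), sq_nonneg (t + K)]
  have h2m : 2*(m:ℝ) ≤ K^2 + K := by
    nlinarith [htK, ht0, htm]
  -- finish
  have hKsq : (9:ℝ)^((1:ℝ)/3) * (n:ℝ)^((2:ℝ)/3) = K^2 := by
    rw [hK]
    push_cast
    rw [Real.mul_rpow (by norm_num) (by positivity)]
    rw [← Real.rpow_natCast ((3:ℝ)^((1:ℝ)/3) * (n:ℝ)^((1:ℝ)/3)) 2]
    rw [Real.mul_rpow (by positivity) (by positivity)]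
    rw [← Real.rpow_mul (by norm_num : (0:ℝ) ≤ 3), ← Real.rpow_mul (Nat.cast_nonneg n)]
    norm_num
    rw [show (9:ℝ) = 3^(2:ℝ) by
      rw [show (2:ℝ) = ((2:ℕ):ℝ) by norm_num, Real.rpow_natCast]; norm_num]
    rw [← Real.rpow_mul (by norm_num : (0:ℝ) ≤ 3)]
    norm_num
  have hKlin : (3:ℝ)^((1:ℝ)/3) * (n:ℝ)^((1:ℝ)/3) = K := by
    rw [hK]; push_cast
    rw [Real.mul_rpow (by norm_num) (Nat.cast_nonneg n)]
  have hSm : (S:ℝ) = (m:ℝ) + 1 := by exact_mod_cast congrArg (Nat.cast : ℕ → ℝ) hmS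
  rw [hSm]
  have hfin : (9:ℝ)^((1:ℝ)/3)/2 * (n:ℝ)^((2:ℝ)/3) + (3:ℝ)^((1:ℝ)/3)/2 * (n:ℝ)^((1:ℝ)/3)
      = K^2/2 + K/2 := by
    rw [← hKsq, ← hKlin]; ring
  rw [hfin]
  linarith [h2m]
end
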